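/- arXiv:2503.15656 — 2 statements merged into one kernel-verified Lean document; each statement's English description precedes it below -/
import Mathlib

section
/- Let (H, {π_i}_{i=1}^N, {τ_i}_{i=1}^N) be Hölder–Brascamp–Lieb data and let V be a subspace of H with {0} ≠ V ≠ H. For each i let P_i denote orthogonal projection onto the orthogonal complement of π_i(V). Suppose (𝒢, {θ_i}) is a valid presentation of the restricted data (V, {π_i|_V}, {τ_i}) and (𝒢^⊥, {θ_i^⊥}) is a valid presentation of the quotient data (V^⊥, {P_i π_i|_{V^⊥}}, {τ_i}). Define 𝒢⁺ to be the directed graph whose vertices are the vertices of 𝒢 together with the subspaces V + W for W a vertex of 𝒢^⊥, with an edge from V₁ to V₂ exactly when V₁, V₂ are vertices of 𝒢 joined by an edge of 𝒢, or V₁ = V + W₁ and V₂ = V + W₂ for W₁, W₂ joined by an edge of 𝒢^⊥; define θ_i⁺ on each edge of 𝒢⁺ as the value of θ_i or θ_i^⊥ on the corresponding edge of 𝒢 or 𝒢^⊥. Then (𝒢⁺, {θ_i⁺}_{i=1}^N) is a valid presentation of (H, {π_i}_{i=1}^N, {τ_i}_{i=1}^N). -/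
open MeasureTheory Module
open scoped ENNReal

noncomputable section

/-- A directed graph whose vertices are linear subspaces of `H`. -/
structure SubspaceGraph (H : Type*) [NormedAddCommGroup H] [InnerProductSpace ℝ H] where
  verts : Set (Submodule ℝ H)
  edges : Set (Submodule ℝ H × Submodule ℝ H)

namespace SubspaceGraph

variable {H : Type*} [NormedAddCommGroup H] [InnerProductSpace ℝ H]

/-- The edges of `G` incoming to the vertex `V`. -/
def incomingEdges (G : SubspaceGraph H) (V : Submodule ℝ H) :
    Set (Submodule ℝ H × Submodule ℝ H) :=
  {e ∈ G.edges | e.2 = V}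

/-- The edges of `G` outgoing from the vertex `V`. -/
def outgoingEdges (G : SubspaceGraph H) (V : Submodule ℝ H) :
    Set (Submodule ℝ H × Submodule ℝ H) :=
  {e ∈ G.edges | e.1 = V}

/-- `G` is a graph decomposition of the subspace `T` of `H` (for a graph decomposition
of `H` itself take `T = ⊤`): the vertices are subspaces of `T`, with `⊥` and `T` among
them; every edge goes from a vertex `V₁` to a vertex `V₂` with `V₁ ⊆ V₂` and
`dim V₂ = dim V₁ + 1`; every vertex other than `⊥` has at least one incoming edge; and
every vertex other than `T` has at least one outgoing edge. -/
def IsDecompositionOf (G : SubspaceGraph H) (T : Submodule ℝ H) : Prop :=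
  G.verts.Finite ∧ G.edges.Finite ∧
  (⊥ : Submodule ℝ H) ∈ G.verts ∧ T ∈ G.verts ∧
  (∀ V ∈ G.verts, V ≤ T) ∧
  (∀ e ∈ G.edges, e.1 ∈ G.verts ∧ e.2 ∈ G.verts ∧ e.1 ≤ e.2 ∧
    finrank ℝ ↥e.2 = finrank ℝ ↥e.1 + 1) ∧
  (∀ V ∈ G.verts, V ≠ ⊥ → ∃ e ∈ G.edges, e.2 = V) ∧
  (∀ V ∈ G.verts, V ≠ T → ∃ e ∈ G.edges, e.1 = V)

/-- A weight function on the edges of `G` is balanced when, at every vertex other than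
`⊥` and the top vertex `T`, the sum over incoming edges equals the sum over outgoing
edges. -/
def IsBalancedWeight {M : Type*} [AddCommMonoid M] (G : SubspaceGraph H)
    (T : Submodule ℝ H) (φ : Submodule ℝ H × Submodule ℝ H → M) : Prop :=
  ∀ V ∈ G.verts, V ≠ ⊥ → V ≠ T →
    ∑ᶠ e ∈ G.incomingEdges V, φ e = ∑ᶠ e ∈ G.outgoingEdges V, φ e

/-- The total mass of a weight function: the sum over all edges outgoing from `⊥`. -/
def totalMass {M : Type*} [AddCommMonoid M] (G : SubspaceGraph H)
    (φ : Submodule ℝ H × Submodule ℝ H → M) : M :=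
  ∑ᶠ e ∈ G.outgoingEdges ⊥, φ e

end SubspaceGraph

/-- The summary weight `σ` of the weights `θ i`: on each edge `e`, the sum of `θ i e`
over those `i` for which `π i` maps the two endpoints of `e` to unequal subspaces. -/
def summaryWeight {H : Type*} [NormedAddCommGroup H] [InnerProductSpace ℝ H]
    {N : ℕ} {H' : Fin N → Type*} [∀ i, NormedAddCommGroup (H' i)]
    [∀ i, InnerProductSpace ℝ (H' i)]
    (π : ∀ i, H →ₗ[ℝ] H' i) (θ : Fin N → Submodule ℝ H × Submodule ℝ H → ℝ)
    (e : Submodule ℝ H × Submodule ℝ H) : ℝ :=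
  ∑ i : Fin N,
    Set.indicator {e' | Submodule.map (π i) e'.1 ≠ Submodule.map (π i) e'.2} (θ i) e

/-- `(G, θ)` is a valid presentation of the Hölder–Brascamp–Lieb data `(H, π, τ)`:
`G` is a graph decomposition of `H`, each `θ i` is a nonnegative balanced weight on the
edges of `G` with total mass `τ i`, and the summary weight is balanced with total
mass `1`. -/
def IsValidPresentation {H : Type*} [NormedAddCommGroup H] [InnerProductSpace ℝ H]
    {N : ℕ} {H' : Fin N → Type*} [∀ i, NormedAddCommGroup (H' i)]
    [∀ i, InnerProductSpace ℝ (H' i)]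
    (π : ∀ i, H →ₗ[ℝ] H' i) (τ : Fin N → ℝ)
    (G : SubspaceGraph H) (θ : Fin N → Submodule ℝ H × Submodule ℝ H → ℝ) : Prop :=
  G.IsDecompositionOf ⊤ ∧
  (∀ i, ∀ e ∈ G.edges, 0 ≤ θ i e) ∧
  (∀ i, G.IsBalancedWeight ⊤ (θ i)) ∧
  (∀ i, G.totalMass (θ i) = τ i) ∧
  G.IsBalancedWeight ⊤ (summaryWeight π θ) ∧
  G.totalMass (summaryWeight π θ) = 1

theorem SubspaceGraph.flow {H : Type*} [NormedAddCommGroup H] [InnerProductSpace ℝ H]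
    (G : SubspaceGraph H) (T : Submodule ℝ H) (hG : G.IsDecompositionOf T)
    (hT : T ≠ ⊥) (φ : Submodule ℝ H × Submodule ℝ H → ℝ)
    (hb : G.IsBalancedWeight T φ) :
    ∑ᶠ e ∈ G.incomingEdges T, φ e = G.totalMass φ := by
  obtain ⟨hvf, hef, hbot, htop, hle, hedge, hin, hout⟩ := hG
  have hIfin : ∀ X, (G.incomingEdges X).Finite := fun X => hef.subset fun e he => he.1
  have hOfin : ∀ X, (G.outgoingEdges X).Finite := fun X => hef.subset fun e he => he.1
  have hIbot : G.incomingEdges ⊥ = ∅ := by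
    ext e
    simp only [SubspaceGraph.incomingEdges, Set.mem_setOf_eq, Set.mem_empty_iff_false, iff_false,
      not_and]
    intro he h2
    have := (hedge e he).2.2.2
    rw [h2, finrank_bot ℝ H] at this
    omega
  have hOtop : G.outgoingEdges T = ∅ := by
    ext e
    simp only [SubspaceGraph.outgoingEdges, Set.mem_setOf_eq, Set.mem_empty_iff_false, iff_false,
      not_and]
    intro he h1
    obtain ⟨-, h2v, h12, hfr⟩ := hedge e he
    have h2T : e.2 = T := le_antisymm (hle _ h2v) (h1 ▸ h12)
    rw [h1, h2T] at hfr
    omega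
  have hUin : (⋃ v ∈ G.verts, G.incomingEdges v) = G.edges := by
    ext e
    simp only [Set.mem_iUnion, SubspaceGraph.incomingEdges, Set.mem_setOf_eq]
    exact ⟨fun ⟨v, hv, he, _⟩ => he, fun he => ⟨e.2, (hedge e he).2.1, he, rfl⟩⟩
  have hUout : (⋃ v ∈ G.verts, G.outgoingEdges v) = G.edges := by
    ext e
    simp only [Set.mem_iUnion, SubspaceGraph.outgoingEdges, Set.mem_setOf_eq]
    exact ⟨fun ⟨v, hv, he, _⟩ => he, fun he => ⟨e.1, (hedge e he).1, he, rfl⟩⟩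
  have hPin : G.verts.PairwiseDisjoint G.incomingEdges := by
    intro v hv w hw hvw
    refine Set.disjoint_left.mpr ?_
    rintro e ⟨-, h1⟩ ⟨-, h2⟩
    exact hvw (h1 ▸ h2)
  have hPout : G.verts.PairwiseDisjoint G.outgoingEdges := by
    intro v hv w hw hvw
    refine Set.disjoint_left.mpr ?_
    rintro e ⟨-, h1⟩ ⟨-, h2⟩
    exact hvw (h1 ▸ h2)
  have key : ∑ᶠ v ∈ G.verts, ∑ᶠ e ∈ G.incomingEdges v, φ e
      = ∑ᶠ v ∈ G.verts, ∑ᶠ e ∈ G.outgoingEdges v, φ e := by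
    rw [← finsum_mem_biUnion hPin hvf (fun v _ => hIfin v),
      ← finsum_mem_biUnion hPout hvf (fun v _ => hOfin v), hUin, hUout]
  have hsub : ({⊥, T} : Set (Submodule ℝ H)) ⊆ G.verts := by
    rintro x (rfl | rfl)
    exacts [hbot, htop]
  have hsplit : G.verts = ({⊥, T} : Set (Submodule ℝ H)) ∪ (G.verts \ {⊥, T}) :=
    (Set.union_diff_cancel hsub).symm
  have hdisj : Disjoint ({⊥, T} : Set (Submodule ℝ H)) (G.verts \ {⊥, T}) :=
    disjoint_sdiff_self_right
  have hrest : ∀ v ∈ G.verts \ {⊥, T},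
      ∑ᶠ e ∈ G.incomingEdges v, φ e = ∑ᶠ e ∈ G.outgoingEdges v, φ e := by
    rintro v ⟨hv, hv2⟩
    simp only [Set.mem_insert_iff, Set.mem_singleton_iff, not_or] at hv2
    exact hb v hv hv2.1 hv2.2
  have hne : (⊥ : Submodule ℝ H) ≠ T := Ne.symm hT
  have e1 : ∑ᶠ v ∈ G.verts, ∑ᶠ e ∈ G.incomingEdges v, φ e
      = ∑ᶠ e ∈ G.incomingEdges T, φ e
        + ∑ᶠ v ∈ G.verts \ {⊥, T}, ∑ᶠ e ∈ G.incomingEdges v, φ e := by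
    conv_lhs => rw [hsplit]
    rw [finsum_mem_union hdisj ((Set.finite_singleton T).insert ⊥)
      (hvf.subset Set.diff_subset), finsum_mem_pair hne, hIbot, finsum_mem_empty, zero_add]
  have e2 : ∑ᶠ v ∈ G.verts, ∑ᶠ e ∈ G.outgoingEdges v, φ e
      = ∑ᶠ e ∈ G.outgoingEdges ⊥, φ e
        + ∑ᶠ v ∈ G.verts \ {⊥, T}, ∑ᶠ e ∈ G.outgoingEdges v, φ e := by
    conv_lhs => rw [hsplit]
    rw [finsum_mem_union hdisj ((Set.finite_singleton T).insert ⊥)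
      (hvf.subset Set.diff_subset), finsum_mem_pair hne, hOtop, finsum_mem_empty, add_zero]
  have e3 : ∑ᶠ v ∈ G.verts \ {⊥, T}, ∑ᶠ e ∈ G.incomingEdges v, φ e
      = ∑ᶠ v ∈ G.verts \ {⊥, T}, ∑ᶠ e ∈ G.outgoingEdges v, φ e :=
    finsum_mem_congr rfl hrest
  rw [e1, e2, e3] at key
  exact add_right_cancel key

/-- `K ⊔ B₁ = K ⊔ B₂` iff the projections of `B₁, B₂` onto `Kᗮ` agree. -/
theorem sup_eq_sup_iff_map_orthogonalProjection_eq {H' : Type*} [NormedAddCommGroup H']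
    [InnerProductSpace ℝ H'] [FiniteDimensional ℝ H'] (K B1 B2 : Submodule ℝ H') :
    K ⊔ B1 = K ⊔ B2 ↔
      Submodule.map (Submodule.orthogonalProjectionOnto Kᗮ).toLinearMap B1
        = Submodule.map (Submodule.orthogonalProjectionOnto Kᗮ).toLinearMap B2 := by
  set P := (Submodule.orthogonalProjectionOnto Kᗮ : H' →L[ℝ] ↥Kᗮ).toLinearMap with hP
  set g : H' →ₗ[ℝ] H' := Kᗮ.subtype ∘ₗ P with hg
  have hsubK : ∀ b : H', b - g b ∈ K := by
    intro b
    have := Submodule.sub_starProjection_mem_orthogonal (K := Kᗮ) b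
    rwa [Submodule.orthogonal_orthogonal] at this
  have hmapg : ∀ B : Submodule ℝ H', Submodule.map g B = Submodule.map Kᗮ.subtype
      (Submodule.map P B) := fun B => Submodule.map_comp _ _ B
  have hmapgK : Submodule.map g K = ⊥ := by
    rw [Submodule.eq_bot_iff]
    rintro x ⟨k, hk, rfl⟩
    have h0 : Submodule.orthogonalProjectionOnto Kᗮ k = 0 :=
      Submodule.orthogonalProjectionOnto_apply_of_mem_orthogonal
        (Submodule.le_orthogonal_orthogonal K hk)
    show Kᗮ.subtype (P k) = 0
    rw [hP]
    simp [h0]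
  have hsup : ∀ B : Submodule ℝ H', K ⊔ Submodule.map g B = K ⊔ B := by
    intro B
    apply le_antisymm
    · refine sup_le le_sup_left ?_
      rintro x hx
      obtain ⟨b, hb, rfl⟩ := Submodule.mem_map.mp hx
      have : g b = b - (b - g b) := (sub_sub_cancel b (g b)).symm
      rw [this]
      exact sub_mem (Submodule.mem_sup_right hb) (Submodule.mem_sup_left (hsubK b))
    · refine sup_le le_sup_left ?_
      intro b hb
      have : b = (b - g b) + g b := by abel
      rw [this]
      exact add_mem (Submodule.mem_sup_left (hsubK b))
        (Submodule.mem_sup_right ⟨b, hb, rfl⟩)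
  constructor
  · intro h
    have hg1 : ∀ B : Submodule ℝ H', Submodule.map g (K ⊔ B) = Submodule.map g B := by
      intro B
      rw [Submodule.map_sup, hmapgK, bot_sup_eq]
    have := congrArg (Submodule.map g) h
    rw [hg1, hg1, hmapg, hmapg] at this
    exact Submodule.map_injective_of_injective Kᗮ.injective_subtype this
  · intro h
    rw [← hsup B1, ← hsup B2, hmapg, hmapg, h]


set_option maxHeartbeats 2000000 in
set_option synthInstance.maxHeartbeats 400000 in
/-- Concatenation of valid presentations: if `(G, θ)` is a valid presentation of the
data restricted to a proper nonzero subspace `V` and `(Gᗮ, θᗮ)` is a valid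
presentation of the quotient data on `Vᗮ` (with maps `Pᵢ ∘ πᵢ` for `Pᵢ` the orthogonal
projection onto `(πᵢ(V))ᗮ`), then the concatenated graph `G⁺` (with the vertices of
`G` viewed in `H` together with the subspaces `V + W` for vertices `W` of `Gᗮ`) with
the corresponding weights `θ⁺` is a valid presentation of the original data. -/
theorem valid_presentation_concatenation
    {H : Type*} [NormedAddCommGroup H] [InnerProductSpace ℝ H] [FiniteDimensional ℝ H]
    {N : ℕ} {H' : Fin N → Type*} [∀ i, NormedAddCommGroup (H' i)]
    [∀ i, InnerProductSpace ℝ (H' i)] [∀ i, FiniteDimensional ℝ (H' i)]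
    (π : ∀ i, H →ₗ[ℝ] H' i) (τ : Fin N → ℝ)
    (V : Submodule ℝ H) (hV0 : V ≠ ⊥) (hVT : V ≠ ⊤)
    (G : SubspaceGraph ↥V) (θ : Fin N → Submodule ℝ ↥V × Submodule ℝ ↥V → ℝ)
    (hG : IsValidPresentation (fun i => (π i).domRestrict V) τ G θ)
    (Gp : SubspaceGraph ↥Vᗮ)
    (θp : Fin N → Submodule ℝ ↥Vᗮ × Submodule ℝ ↥Vᗮ → ℝ)
    (hGp : IsValidPresentation
      (fun i => ((Submodule.orthogonalProjectionOnto (Submodule.map (π i) V)ᗮ).toLinearMap ∘ₗ π i).domRestrict Vᗮ)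
      τ Gp θp)
    (Gplus : SubspaceGraph H)
    (hvp : Gplus.verts =
      (fun X : Submodule ℝ ↥V => Submodule.map V.subtype X) '' G.verts ∪
      (fun Y : Submodule ℝ ↥Vᗮ => V ⊔ Submodule.map Vᗮ.subtype Y) '' Gp.verts)
    (hep : Gplus.edges =
      (fun e : Submodule ℝ ↥V × Submodule ℝ ↥V =>
        (Submodule.map V.subtype e.1, Submodule.map V.subtype e.2)) '' G.edges ∪
      (fun e : Submodule ℝ ↥Vᗮ × Submodule ℝ ↥Vᗮ =>
        (V ⊔ Submodule.map Vᗮ.subtype e.1, V ⊔ Submodule.map Vᗮ.subtype e.2)) '' Gp.edges)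
    (θplus : Fin N → Submodule ℝ H × Submodule ℝ H → ℝ)
    (hθ1 : ∀ i, ∀ e ∈ G.edges,
      θplus i (Submodule.map V.subtype e.1, Submodule.map V.subtype e.2) = θ i e)
    (hθ2 : ∀ i, ∀ e ∈ Gp.edges,
      θplus i (V ⊔ Submodule.map Vᗮ.subtype e.1, V ⊔ Submodule.map Vᗮ.subtype e.2) = θp i e) :
    IsValidPresentation π τ Gplus θplus := by
  classical
  have hGdec := hG.1
  have hPdec := hGp.1
  obtain ⟨hvfG, hefG, hbotG, htopG, hleG, hedgeG, hinG, houtG⟩ := id hGdec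
  obtain ⟨hvfP, hefP, hbotP, htopP, hleP, hedgeP, hinP, houtP⟩ := id hPdec
  have hnnG := hG.2.1
  have hbalG := hG.2.2.1
  have hmassG := hG.2.2.2.1
  have hbalSG := hG.2.2.2.2.1
  have hmassSG := hG.2.2.2.2.2
  have hnnP := hGp.2.1
  have hbalP := hGp.2.2.1
  have hmassP := hGp.2.2.2.1
  have hbalSP := hGp.2.2.2.2.1
  have hmassSP := hGp.2.2.2.2.2
  -- basic facts about the two embeddings of subspaces
  have hιinj : Function.Injective
      (fun X : Submodule ℝ ↥V => Submodule.map V.subtype X) :=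
    Submodule.map_injective_of_injective V.injective_subtype
  have hκsub : ∀ Y : Submodule ℝ ↥Vᗮ,
      (V ⊔ Submodule.map Vᗮ.subtype Y) ⊓ Vᗮ = Submodule.map Vᗮ.subtype Y := by
    intro Y
    rw [sup_comm, sup_inf_assoc_of_le _ (Submodule.map_subtype_le _ _),
      (Submodule.orthogonal_disjoint V).eq_bot, sup_bot_eq]
  have hκinj : Function.Injective
      (fun Y : Submodule ℝ ↥Vᗮ => V ⊔ Submodule.map Vᗮ.subtype Y) := by
    intro Y1 Y2 h
    apply Submodule.map_injective_of_injective Vᗮ.injective_subtype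
    rw [← hκsub Y1, ← hκsub Y2]
    simp only at h
    rw [h]
  have hιle : ∀ X : Submodule ℝ ↥V, Submodule.map V.subtype X ≤ V :=
    fun X => Submodule.map_subtype_le V X
  have hιtop : Submodule.map V.subtype (⊤ : Submodule ℝ ↥V) = V := Submodule.map_subtype_top V
  have hιbot : Submodule.map V.subtype (⊥ : Submodule ℝ ↥V) = ⊥ := Submodule.map_bot _
  have hκbot : V ⊔ Submodule.map Vᗮ.subtype (⊥ : Submodule ℝ ↥Vᗮ) = V := by
    rw [Submodule.map_bot, sup_bot_eq]
  have hκtop : V ⊔ Submodule.map Vᗮ.subtype (⊤ : Submodule ℝ ↥Vᗮ) = ⊤ := by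
    rw [Submodule.map_subtype_top]
    exact Submodule.sup_orthogonal_of_hasOrthogonalProjection
  have hιV : ∀ X : Submodule ℝ ↥V, Submodule.map V.subtype X = V ↔ X = ⊤ :=
    fun X => ⟨fun h => hιinj (h.trans hιtop.symm), fun h => h ▸ hιtop⟩
  have hκV : ∀ Y : Submodule ℝ ↥Vᗮ, V ⊔ Submodule.map Vᗮ.subtype Y = V ↔ Y = ⊥ :=
    fun Y => ⟨fun h => hκinj (h.trans hκbot.symm), fun h => h ▸ hκbot⟩
  have hκ0 : ∀ Y : Submodule ℝ ↥Vᗮ, V ⊔ Submodule.map Vᗮ.subtype Y ≠ ⊥ :=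
    fun Y h => hV0 (le_bot_iff.mp (h ▸ (le_sup_left : V ≤ _)))
  have hικ : ∀ (X : Submodule ℝ ↥V) (Y : Submodule ℝ ↥Vᗮ),
      Submodule.map V.subtype X = V ⊔ Submodule.map Vᗮ.subtype Y → X = ⊤ ∧ Y = ⊥ := by
    intro X Y h
    have hXV : Submodule.map V.subtype X = V :=
      le_antisymm (hιle X) (h ▸ (le_sup_left : V ≤ _))
    exact ⟨(hιV X).mp hXV, (hκV Y).mp (h ▸ hXV)⟩
  have hTne : (⊤ : Submodule ℝ ↥V) ≠ ⊥ := by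
    intro h
    exact hV0 (by rw [← hιtop, h, hιbot])
  have hTneP : (⊤ : Submodule ℝ ↥Vᗮ) ≠ ⊥ := by
    intro h
    exact hVT (by rw [← hκtop, h, hκbot])
  have hιfr : ∀ X : Submodule ℝ ↥V,
      finrank ℝ ↥(Submodule.map V.subtype X) = finrank ℝ ↥X :=
    fun X => Submodule.finrank_map_subtype_eq V X
  have hκfr : ∀ Y : Submodule ℝ ↥Vᗮ,
      finrank ℝ ↥(V ⊔ Submodule.map Vᗮ.subtype Y) = finrank ℝ ↥V + finrank ℝ ↥Y := by
    intro Y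
    have h1 := Submodule.finrank_sup_add_finrank_inf_eq V (Submodule.map Vᗮ.subtype Y)
    have h2 : V ⊓ Submodule.map Vᗮ.subtype Y = ⊥ :=
      ((Submodule.orthogonal_disjoint V).mono_right (Submodule.map_subtype_le _ _)).eq_bot
    rw [h2, finrank_bot ℝ H, Submodule.finrank_map_subtype_eq] at h1
    omega
  -- membership in edges of Gplus
  have memE : ∀ e : Submodule ℝ H × Submodule ℝ H, e ∈ Gplus.edges ↔
      (∃ e', e' ∈ G.edges ∧
        (Submodule.map V.subtype e'.1, Submodule.map V.subtype e'.2) = e) ∨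
      (∃ e', e' ∈ Gp.edges ∧
        (V ⊔ Submodule.map Vᗮ.subtype e'.1, V ⊔ Submodule.map Vᗮ.subtype e'.2) = e) := by
    intro e
    rw [hep]
    simp only [Set.mem_union, Set.mem_image]
  have hFιinj : Function.Injective (fun e : Submodule ℝ ↥V × Submodule ℝ ↥V =>
      (Submodule.map V.subtype e.1, Submodule.map V.subtype e.2)) := by
    intro e1 e2 h
    simp only [Prod.mk.injEq] at h
    exact Prod.ext (hιinj h.1) (hιinj h.2)
  have hFκinj : Function.Injective (fun e : Submodule ℝ ↥Vᗮ × Submodule ℝ ↥Vᗮ =>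
      ((V ⊔ Submodule.map Vᗮ.subtype e.1, V ⊔ Submodule.map Vᗮ.subtype e.2) :
        Submodule ℝ H × Submodule ℝ H)) := by
    intro e1 e2 h
    simp only [Prod.mk.injEq] at h
    exact Prod.ext (hκinj h.1) (hκinj h.2)
  -- incoming / outgoing edge set identities
  have hinc1 : ∀ W : Submodule ℝ ↥V, W ≠ ⊤ →
      Gplus.incomingEdges (Submodule.map V.subtype W) =
        (fun e : Submodule ℝ ↥V × Submodule ℝ ↥V =>
          (Submodule.map V.subtype e.1, Submodule.map V.subtype e.2)) '' G.incomingEdges W := by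
    intro W hW
    ext e
    simp only [SubspaceGraph.incomingEdges, Set.mem_setOf_eq, Set.mem_image]
    constructor
    · rintro ⟨he, h2⟩
      rcases (memE e).mp he with ⟨e', he', rfl⟩ | ⟨e', he', rfl⟩
      · exact ⟨e', ⟨he', hιinj h2⟩, rfl⟩
      · exact absurd ((hικ W e'.2 h2.symm).1) hW
    · rintro ⟨e', ⟨he', h2⟩, rfl⟩
      exact ⟨(memE _).mpr (Or.inl ⟨e', he', rfl⟩), by rw [h2]⟩
  have hout1 : ∀ W : Submodule ℝ ↥V, W ≠ ⊤ →
      Gplus.outgoingEdges (Submodule.map V.subtype W) =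
        (fun e : Submodule ℝ ↥V × Submodule ℝ ↥V =>
          (Submodule.map V.subtype e.1, Submodule.map V.subtype e.2)) '' G.outgoingEdges W := by
    intro W hW
    ext e
    simp only [SubspaceGraph.outgoingEdges, Set.mem_setOf_eq, Set.mem_image]
    constructor
    · rintro ⟨he, h1⟩
      rcases (memE e).mp he with ⟨e', he', rfl⟩ | ⟨e', he', rfl⟩
      · exact ⟨e', ⟨he', hιinj h1⟩, rfl⟩
      · exact absurd ((hικ W e'.1 h1.symm).1) hW
    · rintro ⟨e', ⟨he', h1⟩, rfl⟩
      exact ⟨(memE _).mpr (Or.inl ⟨e', he', rfl⟩), by rw [h1]⟩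
  have hinc2 : ∀ Y : Submodule ℝ ↥Vᗮ, Y ≠ ⊥ →
      Gplus.incomingEdges (V ⊔ Submodule.map Vᗮ.subtype Y) =
        (fun e : Submodule ℝ ↥Vᗮ × Submodule ℝ ↥Vᗮ =>
          (V ⊔ Submodule.map Vᗮ.subtype e.1, V ⊔ Submodule.map Vᗮ.subtype e.2)) ''
            Gp.incomingEdges Y := by
    intro Y hY
    ext e
    simp only [SubspaceGraph.incomingEdges, Set.mem_setOf_eq, Set.mem_image]
    constructor
    · rintro ⟨he, h2⟩
      rcases (memE e).mp he with ⟨e', he', rfl⟩ | ⟨e', he', rfl⟩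
      · exact absurd ((hικ e'.2 Y h2).2) hY
      · exact ⟨e', ⟨he', hκinj h2⟩, rfl⟩
    · rintro ⟨e', ⟨he', h2⟩, rfl⟩
      exact ⟨(memE _).mpr (Or.inr ⟨e', he', rfl⟩), by rw [h2]⟩
  have hout2 : ∀ Y : Submodule ℝ ↥Vᗮ, Y ≠ ⊥ →
      Gplus.outgoingEdges (V ⊔ Submodule.map Vᗮ.subtype Y) =
        (fun e : Submodule ℝ ↥Vᗮ × Submodule ℝ ↥Vᗮ =>
          (V ⊔ Submodule.map Vᗮ.subtype e.1, V ⊔ Submodule.map Vᗮ.subtype e.2)) ''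
            Gp.outgoingEdges Y := by
    intro Y hY
    ext e
    simp only [SubspaceGraph.outgoingEdges, Set.mem_setOf_eq, Set.mem_image]
    constructor
    · rintro ⟨he, h1⟩
      rcases (memE e).mp he with ⟨e', he', rfl⟩ | ⟨e', he', rfl⟩
      · exact absurd ((hικ e'.1 Y h1).2) hY
      · exact ⟨e', ⟨he', hκinj h1⟩, rfl⟩
    · rintro ⟨e', ⟨he', h1⟩, rfl⟩
      exact ⟨(memE _).mpr (Or.inr ⟨e', he', rfl⟩), by rw [h1]⟩
  have hincV : Gplus.incomingEdges V =
      (fun e : Submodule ℝ ↥V × Submodule ℝ ↥V =>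
        (Submodule.map V.subtype e.1, Submodule.map V.subtype e.2)) '' G.incomingEdges ⊤ := by
    ext e
    simp only [SubspaceGraph.incomingEdges, Set.mem_setOf_eq, Set.mem_image]
    constructor
    · rintro ⟨he, h2⟩
      rcases (memE e).mp he with ⟨e', he', rfl⟩ | ⟨e', he', rfl⟩
      · exact ⟨e', ⟨he', (hιV e'.2).mp h2⟩, rfl⟩
      · exfalso
        have hb := (hκV e'.2).mp h2
        have := (hedgeP e' he').2.2.2
        rw [hb, finrank_bot ℝ ↥Vᗮ] at this
        omega
    · rintro ⟨e', ⟨he', h2⟩, rfl⟩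
      exact ⟨(memE _).mpr (Or.inl ⟨e', he', rfl⟩), by rw [h2]; exact hιtop⟩
  have houtV : Gplus.outgoingEdges V =
      (fun e : Submodule ℝ ↥Vᗮ × Submodule ℝ ↥Vᗮ =>
        (V ⊔ Submodule.map Vᗮ.subtype e.1, V ⊔ Submodule.map Vᗮ.subtype e.2)) ''
          Gp.outgoingEdges ⊥ := by
    ext e
    simp only [SubspaceGraph.outgoingEdges, Set.mem_setOf_eq, Set.mem_image]
    constructor
    · rintro ⟨he, h1⟩
      rcases (memE e).mp he with ⟨e', he', rfl⟩ | ⟨e', he', rfl⟩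
      · exfalso
        have hb : e'.1 = ⊤ := (hιV e'.1).mp h1
        obtain ⟨-, h2v, h12, hfr⟩ := hedgeG e' he'
        have h2T : e'.2 = ⊤ := top_unique (hb ▸ h12)
        rw [hb, h2T] at hfr
        omega
      · exact ⟨e', ⟨he', (hκV e'.1).mp h1⟩, rfl⟩
    · rintro ⟨e', ⟨he', h1⟩, rfl⟩
      exact ⟨(memE _).mpr (Or.inr ⟨e', he', rfl⟩), by rw [h1]; exact hκbot⟩
  -- sum transfer lemmas
  have tι : ∀ (f : Submodule ℝ H × Submodule ℝ H → ℝ)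
      (g : Submodule ℝ ↥V × Submodule ℝ ↥V → ℝ) (S : Set (Submodule ℝ ↥V × Submodule ℝ ↥V)),
      S ⊆ G.edges → (∀ e ∈ G.edges,
        f (Submodule.map V.subtype e.1, Submodule.map V.subtype e.2) = g e) →
      ∑ᶠ e ∈ (fun e : Submodule ℝ ↥V × Submodule ℝ ↥V =>
        (Submodule.map V.subtype e.1, Submodule.map V.subtype e.2)) '' S, f e
        = ∑ᶠ e ∈ S, g e := by
    intro f g S hS hfg
    rw [finsum_mem_image (Set.injOn_of_injective hFιinj)]
    exact finsum_mem_congr rfl (fun e he => hfg e (hS he))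
  have tκ : ∀ (f : Submodule ℝ H × Submodule ℝ H → ℝ)
      (gp : Submodule ℝ ↥Vᗮ × Submodule ℝ ↥Vᗮ → ℝ)
      (S : Set (Submodule ℝ ↥Vᗮ × Submodule ℝ ↥Vᗮ)),
      S ⊆ Gp.edges → (∀ e ∈ Gp.edges,
        f (V ⊔ Submodule.map Vᗮ.subtype e.1, V ⊔ Submodule.map Vᗮ.subtype e.2) = gp e) →
      ∑ᶠ e ∈ (fun e : Submodule ℝ ↥Vᗮ × Submodule ℝ ↥Vᗮ =>
        (V ⊔ Submodule.map Vᗮ.subtype e.1, V ⊔ Submodule.map Vᗮ.subtype e.2)) '' S, f e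
        = ∑ᶠ e ∈ S, gp e := by
    intro f gp S hS hfg
    rw [finsum_mem_image (Set.injOn_of_injective hFκinj)]
    exact finsum_mem_congr rfl (fun e he => hfg e (hS he))
  -- the main balancedness/total mass transfer
  have main : ∀ (f : Submodule ℝ H × Submodule ℝ H → ℝ)
      (g : Submodule ℝ ↥V × Submodule ℝ ↥V → ℝ)
      (gp : Submodule ℝ ↥Vᗮ × Submodule ℝ ↥Vᗮ → ℝ),
      (∀ e ∈ G.edges,
        f (Submodule.map V.subtype e.1, Submodule.map V.subtype e.2) = g e) →
      (∀ e ∈ Gp.edges,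
        f (V ⊔ Submodule.map Vᗮ.subtype e.1, V ⊔ Submodule.map Vᗮ.subtype e.2) = gp e) →
      G.IsBalancedWeight ⊤ g → Gp.IsBalancedWeight ⊤ gp →
      G.totalMass g = Gp.totalMass gp →
      Gplus.IsBalancedWeight ⊤ f ∧ Gplus.totalMass f = G.totalMass g := by
    intro f g gp hfg hfgp hbg hbgp hm
    have hflowG : ∑ᶠ e ∈ G.incomingEdges ⊤, g e = G.totalMass g :=
      SubspaceGraph.flow G ⊤ hGdec hTne g hbg
    have hbalV : ∑ᶠ e ∈ Gplus.incomingEdges V, f e = ∑ᶠ e ∈ Gplus.outgoingEdges V, f e := by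
      rw [hincV, houtV, tι f g _ (fun e he => he.1) hfg, tκ f gp _ (fun e he => he.1) hfgp,
        hflowG, hm]
      rfl
    constructor
    · intro X hX hXbot hXtop
      rw [hvp] at hX
      rcases hX with ⟨W, hW, rfl⟩ | ⟨Y, hY, rfl⟩
      · by_cases hWtop : W = ⊤
        · subst hWtop
          simp only [hιtop]
          exact hbalV
        · have hWbot : W ≠ ⊥ := fun h => hXbot (by simp only [h]; exact hιbot)
          simp only
          rw [hinc1 W hWtop, hout1 W hWtop, tι f g _ (fun e he => he.1) hfg,
            tι f g _ (fun e he => he.1) hfg]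
          exact hbg W hW hWbot hWtop
      · by_cases hYbot : Y = ⊥
        · subst hYbot
          simp only [hκbot]
          exact hbalV
        · have hYtop : Y ≠ ⊤ := fun h => hXtop (by simp only [h]; exact hκtop)
          simp only
          rw [hinc2 Y hYbot, hout2 Y hYbot, tκ f gp _ (fun e he => he.1) hfgp,
            tκ f gp _ (fun e he => he.1) hfgp]
          exact hbgp Y hY hYbot hYtop
    · show ∑ᶠ e ∈ Gplus.outgoingEdges ⊥, f e = G.totalMass g
      rw [← hιbot, hout1 ⊥ (fun h => hTne h.symm), tι f g _ (fun e he => he.1) hfg]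
      rfl
  -- pointwise summary weight identities
  have S1 : ∀ e ∈ G.edges, summaryWeight π θplus
      (Submodule.map V.subtype e.1, Submodule.map V.subtype e.2)
      = summaryWeight (fun i => (π i).domRestrict V) θ e := by
    intro e he
    unfold summaryWeight
    refine Finset.sum_congr rfl fun i _ => ?_
    have hmap : ∀ X : Submodule ℝ ↥V, Submodule.map ((π i).domRestrict V) X
        = Submodule.map (π i) (Submodule.map V.subtype X) := fun X => by
      rw [← Submodule.map_comp]
      rfl
    simp only [Set.indicator_apply, Set.mem_setOf_eq, hmap]
    by_cases hc : Submodule.map (π i) (Submodule.map V.subtype e.1)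
        = Submodule.map (π i) (Submodule.map V.subtype e.2)
    · rw [if_neg (not_not_intro hc), if_neg (not_not_intro hc)]
    · rw [if_pos hc, if_pos hc, hθ1 i e he]
  have S2 : ∀ e ∈ Gp.edges, summaryWeight π θplus
      (V ⊔ Submodule.map Vᗮ.subtype e.1, V ⊔ Submodule.map Vᗮ.subtype e.2)
      = summaryWeight (fun i =>
          ((Submodule.orthogonalProjectionOnto (Submodule.map (π i) V)ᗮ).toLinearMap ∘ₗ π i).domRestrict Vᗮ)
        θp e := by
    intro e he
    unfold summaryWeight
    refine Finset.sum_congr rfl fun i _ => ?_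
    have hmapQ : ∀ Y : Submodule ℝ ↥Vᗮ, Submodule.map
        (((Submodule.orthogonalProjectionOnto (Submodule.map (π i) V)ᗮ).toLinearMap ∘ₗ π i).domRestrict Vᗮ) Y
        = Submodule.map (Submodule.orthogonalProjectionOnto (Submodule.map (π i) V)ᗮ).toLinearMap
          (Submodule.map (π i) (Submodule.map Vᗮ.subtype Y)) := fun Y => by
      rw [← Submodule.map_comp, ← Submodule.map_comp]
      rfl
    have hmapκ : ∀ Y : Submodule ℝ ↥Vᗮ, Submodule.map (π i) (V ⊔ Submodule.map Vᗮ.subtype Y)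
        = Submodule.map (π i) V ⊔ Submodule.map (π i) (Submodule.map Vᗮ.subtype Y) := fun Y =>
      Submodule.map_sup _ _ _
    have hiff : Submodule.map (π i) (V ⊔ Submodule.map Vᗮ.subtype e.1)
        = Submodule.map (π i) (V ⊔ Submodule.map Vᗮ.subtype e.2) ↔
        Submodule.map
          (((Submodule.orthogonalProjectionOnto (Submodule.map (π i) V)ᗮ).toLinearMap ∘ₗ π i).domRestrict Vᗮ)
          e.1
        = Submodule.map
          (((Submodule.orthogonalProjectionOnto (Submodule.map (π i) V)ᗮ).toLinearMap ∘ₗ π i).domRestrict Vᗮ)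
          e.2 := by
      rw [hmapκ, hmapκ, hmapQ, hmapQ]
      exact sup_eq_sup_iff_map_orthogonalProjection_eq _ _ _
    simp only [Set.indicator_apply, Set.mem_setOf_eq]
    by_cases hc : Submodule.map (π i) (V ⊔ Submodule.map Vᗮ.subtype e.1)
        = Submodule.map (π i) (V ⊔ Submodule.map Vᗮ.subtype e.2)
    · rw [if_neg (not_not_intro hc), if_neg (not_not_intro (hiff.mp hc))]
    · rw [if_pos hc, if_pos (fun h => hc (hiff.mpr h)), hθ2 i e he]
  -- assemble the decomposition property
  have hdec : Gplus.IsDecompositionOf ⊤ := by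
    refine ⟨?_, ?_, ?_, ?_, fun X _ => le_top, ?_, ?_, ?_⟩
    · rw [hvp]
      exact (hvfG.image _).union (hvfP.image _)
    · rw [hep]
      exact (hefG.image _).union (hefP.image _)
    · rw [hvp]
      exact Set.mem_union_left _ ⟨⊥, hbotG, hιbot⟩
    · rw [hvp]
      exact Set.mem_union_right _ ⟨⊤, htopP, hκtop⟩
    · intro e he
      rw [hvp]
      rcases (memE e).mp he with ⟨e', he', rfl⟩ | ⟨e', he', rfl⟩
      · obtain ⟨h1v, h2v, h12, hfr⟩ := hedgeG e' he'
        exact ⟨Set.mem_union_left _ ⟨e'.1, h1v, rfl⟩, Set.mem_union_left _ ⟨e'.2, h2v, rfl⟩,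
          Submodule.map_mono h12, by rw [hιfr, hιfr, hfr]⟩
      · obtain ⟨h1v, h2v, h12, hfr⟩ := hedgeP e' he'
        refine ⟨Set.mem_union_right _ ⟨e'.1, h1v, rfl⟩, Set.mem_union_right _ ⟨e'.2, h2v, rfl⟩,
          sup_le_sup_left (Submodule.map_mono h12) V, ?_⟩
        rw [hκfr, hκfr, hfr]
        omega
    · intro X hX hXbot
      rw [hvp] at hX
      rcases hX with ⟨W, hW, rfl⟩ | ⟨Y, hY, rfl⟩
      · have hWbot : W ≠ ⊥ := fun h => hXbot (by simp only [h]; exact hιbot)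
        obtain ⟨e, he, h2⟩ := hinG W hW hWbot
        exact ⟨(Submodule.map V.subtype e.1, Submodule.map V.subtype e.2),
          (memE _).mpr (Or.inl ⟨e, he, rfl⟩), by simp only; rw [h2]⟩
      · by_cases hYbot : Y = ⊥
        · subst hYbot
          obtain ⟨e, he, h2⟩ := hinG ⊤ htopG hTne
          exact ⟨(Submodule.map V.subtype e.1, Submodule.map V.subtype e.2),
            (memE _).mpr (Or.inl ⟨e, he, rfl⟩),
            by simp only; rw [h2, hιtop]; exact hκbot.symm⟩
        · obtain ⟨e, he, h2⟩ := hinP Y hY hYbot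
          exact ⟨(V ⊔ Submodule.map Vᗮ.subtype e.1, V ⊔ Submodule.map Vᗮ.subtype e.2),
            (memE _).mpr (Or.inr ⟨e, he, rfl⟩), by simp only; rw [h2]⟩
    · intro X hX hXtop
      rw [hvp] at hX
      rcases hX with ⟨W, hW, rfl⟩ | ⟨Y, hY, rfl⟩
      · by_cases hWtop : W = ⊤
        · subst hWtop
          obtain ⟨e, he, h1⟩ := houtP ⊥ hbotP (fun h => hTneP h.symm)
          exact ⟨(V ⊔ Submodule.map Vᗮ.subtype e.1, V ⊔ Submodule.map Vᗮ.subtype e.2),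
            (memE _).mpr (Or.inr ⟨e, he, rfl⟩),
            by simp only; rw [h1, hιtop]; exact hκbot⟩
        · obtain ⟨e, he, h1⟩ := houtG W hW hWtop
          exact ⟨(Submodule.map V.subtype e.1, Submodule.map V.subtype e.2),
            (memE _).mpr (Or.inl ⟨e, he, rfl⟩), by simp only; rw [h1]⟩
      · have hYtop : Y ≠ ⊤ := fun h => hXtop (by simp only [h]; exact hκtop)
        obtain ⟨e, he, h1⟩ := houtP Y hY hYtop
        exact ⟨(V ⊔ Submodule.map Vᗮ.subtype e.1, V ⊔ Submodule.map Vᗮ.subtype e.2),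
          (memE _).mpr (Or.inr ⟨e, he, rfl⟩), by simp only; rw [h1]⟩
  have mainθ : ∀ i, Gplus.IsBalancedWeight ⊤ (θplus i) ∧ Gplus.totalMass (θplus i) = τ i := by
    intro i
    have h := main (θplus i) (θ i) (θp i) (hθ1 i) (hθ2 i) (hbalG i) (hbalP i)
      ((hmassG i).trans (hmassP i).symm)
    exact ⟨h.1, h.2.trans (hmassG i)⟩
  have mainS := main (summaryWeight π θplus) (summaryWeight (fun i => (π i).domRestrict V) θ)
    (summaryWeight (fun i =>
      ((Submodule.orthogonalProjectionOnto (Submodule.map (π i) V)ᗮ).toLinearMap ∘ₗ π i).domRestrict Vᗮ) θp)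
    S1 S2 hbalSG hbalSP (hmassSG.trans hmassSP.symm)
  refine ⟨hdec, ?_, fun i => (mainθ i).1, fun i => (mainθ i).2, mainS.1,
    mainS.2.trans hmassSG⟩
  intro i e he
  rcases (memE e).mp he with ⟨e', he', rfl⟩ | ⟨e', he', rfl⟩
  · rw [hθ1 i e' he']
    exact hnnG i e' he'
  · rw [hθ2 i e' he']
    exact hnnP i e' he'


end
end

section
/- Let π_1, π_2, π_3, π_4 be the linear maps on ℝ^6 given, for x = (x_1, …, x_6), by π_1(x) = (x_1, x_2, x_5), π_2(x) = (x_2, x_3, x_5 + x_6), π_3(x) = (x_4, x_6), π_4(x) = (x_1, x_3, x_4, x_5 − x_6). If (τ_1, τ_2, τ_3, τ_4) ∈ [0,1]^4 satisfies dim V ≤ Σ_{i=1}^4 τ_i dim π_i(V) for every subspace V of ℝ^6 together with 6 = Σ_{i=1}^4 τ_i dim π_i(ℝ^6), then τ_1 = τ_2 = τ_3 = τ_4 = 1/2. -/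
open MeasureTheory Module
open scoped ENNReal

noncomputable section

section AuxBCCT
variable {E F : Type*} [AddCommGroup E] [Module ℝ E] [AddCommGroup F] [Module ℝ F]

private lemma bcct_aux_map_span (f : E →ₗ[ℝ] F) (v : E) :
    Submodule.map f (Submodule.span ℝ {v}) = Submodule.span ℝ {f v} := by
  rw [Submodule.map_span, Set.image_singleton]

private lemma bcct_aux_rank_one (f : E →ₗ[ℝ] F) (v : E) (h : f v ≠ 0) :
    finrank ℝ (Submodule.map f (Submodule.span ℝ {v})) = 1 := by
  rw [bcct_aux_map_span, finrank_span_singleton h]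

private lemma bcct_aux_rank_zero (f : E →ₗ[ℝ] F) (v : E) (h : f v = 0) :
    finrank ℝ (Submodule.map f (Submodule.span ℝ {v})) = 0 := by
  rw [bcct_aux_map_span, h, Submodule.span_zero_singleton, finrank_bot]

end AuxBCCT

/-- For the four explicit maps `π₁, π₂, π₃, π₄` on `ℝ⁶`, the only exponents in
`[0,1]⁴` satisfying the Bennett–Carbery–Christ–Tao conditions are
`τ₁ = τ₂ = τ₃ = τ₄ = 1/2`. -/
theorem r6_example_exponents_determined
    (π₁ : EuclideanSpace ℝ (Fin 6) →ₗ[ℝ] EuclideanSpace ℝ (Fin 3))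
    (π₂ : EuclideanSpace ℝ (Fin 6) →ₗ[ℝ] EuclideanSpace ℝ (Fin 3))
    (π₃ : EuclideanSpace ℝ (Fin 6) →ₗ[ℝ] EuclideanSpace ℝ (Fin 2))
    (π₄ : EuclideanSpace ℝ (Fin 6) →ₗ[ℝ] EuclideanSpace ℝ (Fin 4))
    (hπ₁ : ∀ x, π₁ x 0 = x 0 ∧ π₁ x 1 = x 1 ∧ π₁ x 2 = x 4)
    (hπ₂ : ∀ x, π₂ x 0 = x 1 ∧ π₂ x 1 = x 2 ∧ π₂ x 2 = x 4 + x 5)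
    (hπ₃ : ∀ x, π₃ x 0 = x 3 ∧ π₃ x 1 = x 5)
    (hπ₄ : ∀ x, π₄ x 0 = x 0 ∧ π₄ x 1 = x 2 ∧ π₄ x 2 = x 3 ∧ π₄ x 3 = x 4 - x 5)
    (τ₁ τ₂ τ₃ τ₄ : ℝ)
    (hτ : τ₁ ∈ Set.Icc (0 : ℝ) 1 ∧ τ₂ ∈ Set.Icc (0 : ℝ) 1 ∧
      τ₃ ∈ Set.Icc (0 : ℝ) 1 ∧ τ₄ ∈ Set.Icc (0 : ℝ) 1)
    (h1 : ∀ V : Submodule ℝ (EuclideanSpace ℝ (Fin 6)),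
      (finrank ℝ ↥V : ℝ) ≤
        τ₁ * (finrank ℝ ↥(Submodule.map π₁ V) : ℝ) +
        τ₂ * (finrank ℝ ↥(Submodule.map π₂ V) : ℝ) +
        τ₃ * (finrank ℝ ↥(Submodule.map π₃ V) : ℝ) +
        τ₄ * (finrank ℝ ↥(Submodule.map π₄ V) : ℝ))
    (h2 : (6 : ℝ) =
        τ₁ * (finrank ℝ ↥(Submodule.map π₁ (⊤ : Submodule ℝ (EuclideanSpace ℝ (Fin 6)))) : ℝ) +
        τ₂ * (finrank ℝ ↥(Submodule.map π₂ (⊤ : Submodule ℝ (EuclideanSpace ℝ (Fin 6)))) : ℝ) +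
        τ₃ * (finrank ℝ ↥(Submodule.map π₃ (⊤ : Submodule ℝ (EuclideanSpace ℝ (Fin 6)))) : ℝ) +
        τ₄ * (finrank ℝ ↥(Submodule.map π₄ (⊤ : Submodule ℝ (EuclideanSpace ℝ (Fin 6)))) : ℝ)) :
    τ₁ = 1 / 2 ∧ τ₂ = 1 / 2 ∧ τ₃ = 1 / 2 ∧ τ₄ = 1 / 2 := by
  obtain ⟨hτ1, hτ2, hτ3, hτ4⟩ := hτ
  -- basis vectors
  set e : Fin 6 → EuclideanSpace ℝ (Fin 6) := fun k => EuclideanSpace.single k 1 with he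
  have he_apply : ∀ k j, e k j = if j = k then (1 : ℝ) else 0 := fun k j =>
    EuclideanSpace.single_apply k 1 j
  have he_ne : ∀ k, e k ≠ 0 := by
    intro k h
    have := congrFun (congrArg WithLp.ofLp h) k
    simp [he_apply] at this
  have hspan : ∀ k, finrank ℝ (Submodule.span ℝ {e k}) = 1 := fun k =>
    finrank_span_singleton (he_ne k)
  -- surjectivity of the four maps
  have hrt1 : finrank ℝ (Submodule.map π₁ (⊤ : Submodule ℝ (EuclideanSpace ℝ (Fin 6)))) = 3 := by
    have hs : Function.Surjective π₁ := by
      intro y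
      refine ⟨(WithLp.equiv 2 (Fin 6 → ℝ)).symm ![y 0, y 1, 0, 0, y 2, 0], ?_⟩
      ext i
      fin_cases i
      · simpa [WithLp.equiv_symm_apply, PiLp.toLp_apply] using (hπ₁ ((WithLp.equiv 2 (Fin 6 → ℝ)).symm ![y 0, y 1, 0, 0, y 2, 0])).1
      · simpa [WithLp.equiv_symm_apply, PiLp.toLp_apply] using (hπ₁ ((WithLp.equiv 2 (Fin 6 → ℝ)).symm ![y 0, y 1, 0, 0, y 2, 0])).2.1
      · simpa [WithLp.equiv_symm_apply, PiLp.toLp_apply] using (hπ₁ ((WithLp.equiv 2 (Fin 6 → ℝ)).symm ![y 0, y 1, 0, 0, y 2, 0])).2.2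
    rw [Submodule.map_top, LinearMap.range_eq_top.mpr hs, finrank_top, finrank_euclideanSpace]
    simp
  have hrt2 : finrank ℝ (Submodule.map π₂ (⊤ : Submodule ℝ (EuclideanSpace ℝ (Fin 6)))) = 3 := by
    have hs : Function.Surjective π₂ := by
      intro y
      refine ⟨(WithLp.equiv 2 (Fin 6 → ℝ)).symm ![0, y 0, y 1, 0, y 2, 0], ?_⟩
      ext i
      fin_cases i
      · simpa [WithLp.equiv_symm_apply, PiLp.toLp_apply] using (hπ₂ ((WithLp.equiv 2 (Fin 6 → ℝ)).symm ![0, y 0, y 1, 0, y 2, 0])).1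
      · simpa [WithLp.equiv_symm_apply, PiLp.toLp_apply] using (hπ₂ ((WithLp.equiv 2 (Fin 6 → ℝ)).symm ![0, y 0, y 1, 0, y 2, 0])).2.1
      · simpa [WithLp.equiv_symm_apply, PiLp.toLp_apply,
          show ![(0:ℝ), y 0, y 1, 0, y 2, 0] 5 = 0 from rfl] using
          (hπ₂ ((WithLp.equiv 2 (Fin 6 → ℝ)).symm ![0, y 0, y 1, 0, y 2, 0])).2.2
    rw [Submodule.map_top, LinearMap.range_eq_top.mpr hs, finrank_top, finrank_euclideanSpace]
    simp
  have hrt3 : finrank ℝ (Submodule.map π₃ (⊤ : Submodule ℝ (EuclideanSpace ℝ (Fin 6)))) = 2 := by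
    have hs : Function.Surjective π₃ := by
      intro y
      refine ⟨(WithLp.equiv 2 (Fin 6 → ℝ)).symm ![0, 0, 0, y 0, 0, y 1], ?_⟩
      ext i
      fin_cases i
      · simpa [WithLp.equiv_symm_apply, PiLp.toLp_apply] using (hπ₃ ((WithLp.equiv 2 (Fin 6 → ℝ)).symm ![0, 0, 0, y 0, 0, y 1])).1
      · simpa [WithLp.equiv_symm_apply, PiLp.toLp_apply] using (hπ₃ ((WithLp.equiv 2 (Fin 6 → ℝ)).symm ![0, 0, 0, y 0, 0, y 1])).2
    rw [Submodule.map_top, LinearMap.range_eq_top.mpr hs, finrank_top, finrank_euclideanSpace]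
    simp
  have hrt4 : finrank ℝ (Submodule.map π₄ (⊤ : Submodule ℝ (EuclideanSpace ℝ (Fin 6)))) = 4 := by
    have hs : Function.Surjective π₄ := by
      intro y
      refine ⟨(WithLp.equiv 2 (Fin 6 → ℝ)).symm ![y 0, 0, y 1, y 2, y 3, 0], ?_⟩
      ext i
      fin_cases i
      · simpa [WithLp.equiv_symm_apply, PiLp.toLp_apply] using (hπ₄ ((WithLp.equiv 2 (Fin 6 → ℝ)).symm ![y 0, 0, y 1, y 2, y 3, 0])).1
      · simpa [WithLp.equiv_symm_apply, PiLp.toLp_apply] using (hπ₄ ((WithLp.equiv 2 (Fin 6 → ℝ)).symm ![y 0, 0, y 1, y 2, y 3, 0])).2.1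
      · simpa [WithLp.equiv_symm_apply, PiLp.toLp_apply] using (hπ₄ ((WithLp.equiv 2 (Fin 6 → ℝ)).symm ![y 0, 0, y 1, y 2, y 3, 0])).2.2.1
      · simpa [WithLp.equiv_symm_apply, PiLp.toLp_apply,
          show ![y 0, (0:ℝ), y 1, y 2, y 3, 0] 5 = 0 from rfl] using
          (hπ₄ ((WithLp.equiv 2 (Fin 6 → ℝ)).symm ![y 0, 0, y 1, y 2, y 3, 0])).2.2.2
    rw [Submodule.map_top, LinearMap.range_eq_top.mpr hs, finrank_top, finrank_euclideanSpace]
    simp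
  -- nonzero images
  have hnz11 : π₁ (e 0) ≠ 0 := by
    intro h
    have := (hπ₁ (e 0)).1
    rw [h] at this
    simp [he_apply] at this
  have hnz12 : π₁ (e 1) ≠ 0 := by
    intro h
    have := (hπ₁ (e 1)).2.1
    rw [h] at this
    simp [he_apply] at this
  have hnz21 : π₂ (e 1) ≠ 0 := by
    intro h
    have := (hπ₂ (e 1)).1
    rw [h] at this
    simp [he_apply] at this
  have hnz22 : π₂ (e 2) ≠ 0 := by
    intro h
    have := (hπ₂ (e 2)).2.1
    rw [h] at this
    simp [he_apply] at this
  have hnz31 : π₃ (e 3) ≠ 0 := by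
    intro h
    have := (hπ₃ (e 3)).1
    rw [h] at this
    simp [he_apply] at this
  have hnz41 : π₄ (e 0) ≠ 0 := by
    intro h
    have := (hπ₄ (e 0)).1
    rw [h] at this
    simp [he_apply] at this
  have hnz42 : π₄ (e 2) ≠ 0 := by
    intro h
    have := (hπ₄ (e 2)).2.1
    rw [h] at this
    simp [he_apply] at this
  have hnz43 : π₄ (e 3) ≠ 0 := by
    intro h
    have := (hπ₄ (e 3)).2.2.1
    rw [h] at this
    simp [he_apply] at this
  -- zero images
  have hz12 : π₁ (e 2) = 0 := by
    ext i
    fin_cases i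
    · simpa [he_apply] using (hπ₁ (e 2)).1
    · simpa [he_apply] using (hπ₁ (e 2)).2.1
    · simpa [he_apply] using (hπ₁ (e 2)).2.2
  have hz13 : π₁ (e 3) = 0 := by
    ext i
    fin_cases i
    · simpa [he_apply] using (hπ₁ (e 3)).1
    · simpa [he_apply] using (hπ₁ (e 3)).2.1
    · simpa [he_apply] using (hπ₁ (e 3)).2.2
  have hz20 : π₂ (e 0) = 0 := by
    ext i
    fin_cases i
    · simpa [he_apply] using (hπ₂ (e 0)).1
    · simpa [he_apply] using (hπ₂ (e 0)).2.1
    · simpa [he_apply] using (hπ₂ (e 0)).2.2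
  have hz23 : π₂ (e 3) = 0 := by
    ext i
    fin_cases i
    · simpa [he_apply] using (hπ₂ (e 3)).1
    · simpa [he_apply] using (hπ₂ (e 3)).2.1
    · simpa [he_apply] using (hπ₂ (e 3)).2.2
  have hz30 : π₃ (e 0) = 0 := by
    ext i
    fin_cases i
    · simpa [he_apply] using (hπ₃ (e 0)).1
    · simpa [he_apply] using (hπ₃ (e 0)).2
  have hz31 : π₃ (e 1) = 0 := by
    ext i
    fin_cases i
    · simpa [he_apply] using (hπ₃ (e 1)).1
    · simpa [he_apply] using (hπ₃ (e 1)).2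
  have hz32 : π₃ (e 2) = 0 := by
    ext i
    fin_cases i
    · simpa [he_apply] using (hπ₃ (e 2)).1
    · simpa [he_apply] using (hπ₃ (e 2)).2
  have hz41 : π₄ (e 1) = 0 := by
    ext i
    fin_cases i
    · simpa [he_apply] using (hπ₄ (e 1)).1
    · simpa [he_apply] using (hπ₄ (e 1)).2.1
    · simpa [he_apply] using (hπ₄ (e 1)).2.2.1
    · simpa [he_apply] using (hπ₄ (e 1)).2.2.2
  -- the four key inequalities
  have hA := h1 (Submodule.span ℝ {e 0})
  rw [hspan, bcct_aux_rank_one π₁ _ hnz11, bcct_aux_rank_zero π₂ _ hz20,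
    bcct_aux_rank_zero π₃ _ hz30, bcct_aux_rank_one π₄ _ hnz41] at hA
  have hB := h1 (Submodule.span ℝ {e 1})
  rw [hspan, bcct_aux_rank_one π₁ _ hnz12, bcct_aux_rank_one π₂ _ hnz21,
    bcct_aux_rank_zero π₃ _ hz31, bcct_aux_rank_zero π₄ _ hz41] at hB
  have hC := h1 (Submodule.span ℝ {e 2})
  rw [hspan, bcct_aux_rank_zero π₁ _ hz12, bcct_aux_rank_one π₂ _ hnz22,
    bcct_aux_rank_zero π₃ _ hz32, bcct_aux_rank_one π₄ _ hnz42] at hC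
  have hD := h1 (Submodule.span ℝ {e 3})
  rw [hspan, bcct_aux_rank_zero π₁ _ hz13, bcct_aux_rank_zero π₂ _ hz23,
    bcct_aux_rank_one π₃ _ hnz31, bcct_aux_rank_one π₄ _ hnz43] at hD
  rw [hrt1, hrt2, hrt3, hrt4] at h2
  norm_num at hA hB hC hD h2
  refine ⟨by linarith, by linarith, by linarith, by linarith⟩

end
end
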